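/- Full induction for the QBF structure: composing the universal and existential gadgets according to the quantifier prefix, starting from leaf structures whose routing sends L to YES iff φ(𝐱) is true, the resulting top-level structure S(Φ) routes its left input to its YES output if and only if the quantified Boolean formula Φ evaluates to true. -/
import Mathlib


/-- Input terminals of a substructure. -/
inductive Term where
  | L | BACK
deriving DecidableEq

/-- Output terminals of a substructure. -/
inductive OutT where
  | YES | NO
deriving DecidableEq

/-- The routing of a (sub)structure whose formula has truth value `b`:
`L ↦ YES`, `BACK ↦ NO` if `b` is true, and `L ↦ NO`, `BACK ↦ YES` otherwise. -/
def route (b : Bool) : Term → OutT := fun t =>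
  match b, t with
  | true, .L => .YES
  | true, .BACK => .NO
  | false, .L => .NO
  | false, .BACK => .YES

/-- Nodes of a combined gadget: the combined terminals together with the input
and output terminals of the two substructures `S₀` and `S₁`. -/
inductive GNode where
  | inL | inBACK | outYES | outNO
  | inp : Fin 2 → Term → GNode
  | out : Fin 2 → OutT → GNode
deriving DecidableEq

/-- Combined input terminals as nodes. -/
def inNode : Term → GNode
  | .L => .inL
  | .BACK => .inBACK

/-- The universal gadget: wiring `L → L₀`, `YES₀ → L₁`, `NO₀ → NO_out`,
`YES₁ → YES_out`, `NO₁ → BACK₀`, `BACK_out → BACK₁` together with the internal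
routings `r0`, `r1`. -/
inductive uEdge (r0 r1 : Term → OutT) : GNode → GNode → Prop where
  | wire_inL : uEdge r0 r1 .inL (.inp 0 .L)
  | wire_yes0 : uEdge r0 r1 (.out 0 .YES) (.inp 1 .L)
  | wire_no0 : uEdge r0 r1 (.out 0 .NO) .outNO
  | wire_yes1 : uEdge r0 r1 (.out 1 .YES) .outYES
  | wire_no1 : uEdge r0 r1 (.out 1 .NO) (.inp 0 .BACK)
  | wire_back : uEdge r0 r1 .inBACK (.inp 1 .BACK)
  | route0 (t : Term) : uEdge r0 r1 (.inp 0 t) (.out 0 (r0 t))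
  | route1 (t : Term) : uEdge r0 r1 (.inp 1 t) (.out 1 (r1 t))

/-- The existential gadget: wiring `L → L₀`, `NO₀ → L₁`, `YES₀ → YES_out`,
`NO₁ → NO_out`, `YES₁ → BACK₀`, `BACK_out → BACK₁` together with the internal
routings `r0`, `r1`. -/
inductive eEdge (r0 r1 : Term → OutT) : GNode → GNode → Prop where
  | wire_inL : eEdge r0 r1 .inL (.inp 0 .L)
  | wire_no0 : eEdge r0 r1 (.out 0 .NO) (.inp 1 .L)
  | wire_yes0 : eEdge r0 r1 (.out 0 .YES) .outYES
  | wire_no1 : eEdge r0 r1 (.out 1 .NO) .outNO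
  | wire_yes1 : eEdge r0 r1 (.out 1 .YES) (.inp 0 .BACK)
  | wire_back : eEdge r0 r1 .inBACK (.inp 1 .BACK)
  | route0 (t : Term) : eEdge r0 r1 (.inp 0 t) (.out 0 (r0 t))
  | route1 (t : Term) : eEdge r0 r1 (.inp 1 t) (.out 1 (r1 t))

open Classical in
/-- The combined routing of the universal gadget: a combined input is routed to
`YES_out` exactly when `YES_out` is reachable from it by following the wiring
and the substructure routings. -/
noncomputable def combineU (r0 r1 : Term → OutT) : Term → OutT := fun t =>
  if Relation.ReflTransGen (uEdge r0 r1) (inNode t) .outYES then .YES else .NO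

open Classical in
/-- The combined routing of the existential gadget: a combined input is routed
to `YES_out` exactly when `YES_out` is reachable from it by following the
wiring and the substructure routings. -/
noncomputable def combineE (r0 r1 : Term → OutT) : Term → OutT := fun t =>
  if Relation.ReflTransGen (eEdge r0 r1) (inNode t) .outYES then .YES else .NO

/-- The routing of the structure `S(Φ_x)` for the prefix assignment `x` of
length `i`: leaves use `route (φ x)`, and internal structures combine the
structures for `x0` and `x1` with the universal gadget if `Q i` is universal
(`true`) and the existential gadget otherwise. -/
noncomputable def strRoute (n : ℕ) (Q : Fin n → Bool)
    (φ : (Fin n → Bool) → Bool) : (i : ℕ) → (Fin i → Bool) → Term → OutT :=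
  fun i x =>
  if h : i < n then
    let r0 := strRoute n Q φ (i + 1) (Fin.snoc x false)
    let r1 := strRoute n Q φ (i + 1) (Fin.snoc x true)
    if Q ⟨i, h⟩ then combineU r0 r1 else combineE r0 r1
  else if h' : i = n then route (φ (fun j => x (Fin.cast h'.symm j)))
  else route false
termination_by i => n - i
decreasing_by all_goals omega

/-- The semantic truth value of the subformula `Φ_x`, with `∧` interpreting
universal quantifiers and `∨` interpreting existential ones over `Bool`. -/
def valQ (n : ℕ) (Q : Fin n → Bool) (φ : (Fin n → Bool) → Bool) :
    (i : ℕ) → (Fin i → Bool) → Bool := fun i x =>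
  if h : i < n then
    if Q ⟨i, h⟩ then
      decide (∀ b : Bool, valQ n Q φ (i + 1) (Fin.snoc x b) = true)
    else
      decide (∃ b : Bool, valQ n Q φ (i + 1) (Fin.snoc x b) = true)
  else if h' : i = n then φ (fun j => x (Fin.cast h'.symm j))
  else false
termination_by i => n - i
decreasing_by all_goals omega

open Relation

lemma uEdge_det (r0 r1 : Term → OutT) :
    ∀ x y z, uEdge r0 r1 x y → uEdge r0 r1 x z → y = z := by
  intro x y z h1 h2
  cases h1 <;> cases h2 <;> rfl

lemma eEdge_det (r0 r1 : Term → OutT) :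
    ∀ x y z, eEdge r0 r1 x y → eEdge r0 r1 x z → y = z := by
  intro x y z h1 h2
  cases h1 <;> cases h2 <;> rfl

lemma rtg_diamond {α} {R : α → α → Prop}
    (det : ∀ x y z, R x y → R x z → y = z) {a b c : α}
    (h1 : ReflTransGen R a b) (h2 : ReflTransGen R a c) :
    ReflTransGen R b c ∨ ReflTransGen R c b := by
  induction h1 with
  | refl => exact Or.inl h2
  | @tail b' b h1' e ih =>
    rcases ih with h | h
    · rcases h.cases_head with rfl | ⟨d, e', hd⟩
      · exact Or.inr (ReflTransGen.single e)
      · rw [det _ _ _ e' e] at hd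
        exact Or.inl hd
    · exact Or.inr (h.tail e)

lemma rtg_not {α} {R : α → α → Prop}
    (det : ∀ x y z, R x y → R x z → y = z) {a b c : α}
    (h1 : ReflTransGen R a b) (hb : ∀ y, ¬ R b y) (hc : ∀ y, ¬ R c y)
    (hbc : b ≠ c) : ¬ ReflTransGen R a c := by
  intro h2
  rcases rtg_diamond det h1 h2 with h | h
  · rcases h.cases_head with rfl | ⟨d, e', _⟩
    · exact hbc rfl
    · exact hb _ e'
  · rcases h.cases_head with rfl | ⟨d, e', _⟩
    · exact hbc rfl
    · exact hc _ e'

lemma uEdge_term_yes (r0 r1 : Term → OutT) : ∀ y, ¬ uEdge r0 r1 .outYES y := by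
  intro y h; cases h

lemma uEdge_term_no (r0 r1 : Term → OutT) : ∀ y, ¬ uEdge r0 r1 .outNO y := by
  intro y h; cases h

lemma eEdge_term_yes (r0 r1 : Term → OutT) : ∀ y, ¬ eEdge r0 r1 .outYES y := by
  intro y h; cases h

lemma eEdge_term_no (r0 r1 : Term → OutT) : ∀ y, ¬ eEdge r0 r1 .outNO y := by
  intro y h; cases h

lemma combineU_eq (a b : Bool) :
    combineU (route a) (route b) = route (a && b) := by
  funext t
  unfold combineU
  cases a <;> cases b <;> cases t
  · have p : ReflTransGen (uEdge (route false) (route false)) (inNode Term.L) GNode.outNO :=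
      ReflTransGen.head .wire_inL (ReflTransGen.head (.route0 .L) (ReflTransGen.single .wire_no0))
    rw [if_neg (rtg_not (uEdge_det _ _) p (uEdge_term_no _ _) (uEdge_term_yes _ _) (by simp))]; rfl
  · have p : ReflTransGen (uEdge (route false) (route false)) (inNode Term.BACK) GNode.outYES :=
      ReflTransGen.head .wire_back (ReflTransGen.head (.route1 .BACK) (ReflTransGen.single .wire_yes1))
    rw [if_pos p]; rfl
  · have p : ReflTransGen (uEdge (route false) (route true)) (inNode Term.L) GNode.outNO :=
      ReflTransGen.head .wire_inL (ReflTransGen.head (.route0 .L) (ReflTransGen.single .wire_no0))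
    rw [if_neg (rtg_not (uEdge_det _ _) p (uEdge_term_no _ _) (uEdge_term_yes _ _) (by simp))]; rfl
  · have p : ReflTransGen (uEdge (route false) (route true)) (inNode Term.BACK) GNode.outYES :=
      ReflTransGen.head .wire_back (ReflTransGen.head (.route1 .BACK) (ReflTransGen.head .wire_no1 (ReflTransGen.head (.route0 .BACK) (ReflTransGen.head .wire_yes0 (ReflTransGen.head (.route1 .L) (ReflTransGen.single .wire_yes1))))))
    rw [if_pos p]; rfl
  · have p : ReflTransGen (uEdge (route true) (route false)) (inNode Term.L) GNode.outNO :=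
      ReflTransGen.head .wire_inL (ReflTransGen.head (.route0 .L) (ReflTransGen.head .wire_yes0 (ReflTransGen.head (.route1 .L) (ReflTransGen.head .wire_no1 (ReflTransGen.head (.route0 .BACK) (ReflTransGen.single .wire_no0))))))
    rw [if_neg (rtg_not (uEdge_det _ _) p (uEdge_term_no _ _) (uEdge_term_yes _ _) (by simp))]; rfl
  · have p : ReflTransGen (uEdge (route true) (route false)) (inNode Term.BACK) GNode.outYES :=
      ReflTransGen.head .wire_back (ReflTransGen.head (.route1 .BACK) (ReflTransGen.single .wire_yes1))
    rw [if_pos p]; rfl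
  · have p : ReflTransGen (uEdge (route true) (route true)) (inNode Term.L) GNode.outYES :=
      ReflTransGen.head .wire_inL (ReflTransGen.head (.route0 .L) (ReflTransGen.head .wire_yes0 (ReflTransGen.head (.route1 .L) (ReflTransGen.single .wire_yes1))))
    rw [if_pos p]; rfl
  · have p : ReflTransGen (uEdge (route true) (route true)) (inNode Term.BACK) GNode.outNO :=
      ReflTransGen.head .wire_back (ReflTransGen.head (.route1 .BACK) (ReflTransGen.head .wire_no1 (ReflTransGen.head (.route0 .BACK) (ReflTransGen.single .wire_no0))))
    rw [if_neg (rtg_not (uEdge_det _ _) p (uEdge_term_no _ _) (uEdge_term_yes _ _) (by simp))]; rfl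

lemma combineE_eq (a b : Bool) :
    combineE (route a) (route b) = route (a || b) := by
  funext t
  unfold combineE
  cases a <;> cases b <;> cases t
  · have p : ReflTransGen (eEdge (route false) (route false)) (inNode Term.L) GNode.outNO :=
      ReflTransGen.head .wire_inL (ReflTransGen.head (.route0 .L) (ReflTransGen.head .wire_no0 (ReflTransGen.head (.route1 .L) (ReflTransGen.single .wire_no1))))
    rw [if_neg (rtg_not (eEdge_det _ _) p (eEdge_term_no _ _) (eEdge_term_yes _ _) (by simp))]; rfl
  · have p : ReflTransGen (eEdge (route false) (route false)) (inNode Term.BACK) GNode.outYES :=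
      ReflTransGen.head .wire_back (ReflTransGen.head (.route1 .BACK) (ReflTransGen.head .wire_yes1 (ReflTransGen.head (.route0 .BACK) (ReflTransGen.single .wire_yes0))))
    rw [if_pos p]; rfl
  · have p : ReflTransGen (eEdge (route false) (route true)) (inNode Term.L) GNode.outYES :=
      ReflTransGen.head .wire_inL (ReflTransGen.head (.route0 .L) (ReflTransGen.head .wire_no0 (ReflTransGen.head (.route1 .L) (ReflTransGen.head .wire_yes1 (ReflTransGen.head (.route0 .BACK) (ReflTransGen.single .wire_yes0))))))
    rw [if_pos p]; rfl
  · have p : ReflTransGen (eEdge (route false) (route true)) (inNode Term.BACK) GNode.outNO :=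
      ReflTransGen.head .wire_back (ReflTransGen.head (.route1 .BACK) (ReflTransGen.single .wire_no1))
    rw [if_neg (rtg_not (eEdge_det _ _) p (eEdge_term_no _ _) (eEdge_term_yes _ _) (by simp))]; rfl
  · have p : ReflTransGen (eEdge (route true) (route false)) (inNode Term.L) GNode.outYES :=
      ReflTransGen.head .wire_inL (ReflTransGen.head (.route0 .L) (ReflTransGen.single .wire_yes0))
    rw [if_pos p]; rfl
  · have p : ReflTransGen (eEdge (route true) (route false)) (inNode Term.BACK) GNode.outNO :=
      ReflTransGen.head .wire_back (ReflTransGen.head (.route1 .BACK) (ReflTransGen.head .wire_yes1 (ReflTransGen.head (.route0 .BACK) (ReflTransGen.head .wire_no0 (ReflTransGen.head (.route1 .L) (ReflTransGen.single .wire_no1))))))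
    rw [if_neg (rtg_not (eEdge_det _ _) p (eEdge_term_no _ _) (eEdge_term_yes _ _) (by simp))]; rfl
  · have p : ReflTransGen (eEdge (route true) (route true)) (inNode Term.L) GNode.outYES :=
      ReflTransGen.head .wire_inL (ReflTransGen.head (.route0 .L) (ReflTransGen.single .wire_yes0))
    rw [if_pos p]; rfl
  · have p : ReflTransGen (eEdge (route true) (route true)) (inNode Term.BACK) GNode.outNO :=
      ReflTransGen.head .wire_back (ReflTransGen.head (.route1 .BACK) (ReflTransGen.single .wire_no1))
    rw [if_neg (rtg_not (eEdge_det _ _) p (eEdge_term_no _ _) (eEdge_term_yes _ _) (by simp))]; rfl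

lemma strRoute_eq_route (n : ℕ) (Q : Fin n → Bool)
    (φ : (Fin n → Bool) → Bool) :
    ∀ k i, n - i = k → i ≤ n → ∀ x : Fin i → Bool,
      strRoute n Q φ i x = route (valQ n Q φ i x) := by
  intro k
  induction k with
  | zero =>
    intro i hk hin x
    have hi : i = n := by omega
    rw [strRoute, valQ]
    simp [show ¬ i < n by omega, hi]
  | succ k ih =>
    intro i hk hin x
    have h : i < n := by omega
    rw [strRoute, valQ]
    simp only [dif_pos h]
    rw [ih (i + 1) (by omega) (by omega) (Fin.snoc x false),
        ih (i + 1) (by omega) (by omega) (Fin.snoc x true)]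
    cases hQ : Q ⟨i, h⟩ <;> simp only [if_true, if_false, combineU_eq, combineE_eq]
    · 
      cases hu : valQ n Q φ (i + 1) (Fin.snoc x false) <;>
        cases hv : valQ n Q φ (i + 1) (Fin.snoc x true) <;>
        simp [Bool.exists_bool, hu, hv]
    · 
      cases hu : valQ n Q φ (i + 1) (Fin.snoc x false) <;>
        cases hv : valQ n Q φ (i + 1) (Fin.snoc x true) <;>
        simp [Bool.forall_bool, hu, hv]

/-- Full induction for the QBF structure: every structure `S(Φ_x)` has routing
`route` of the truth value of its subformula; in particular the top-level
structure routes its left input to `YES` iff the quantified Boolean formula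
evaluates to true. -/
theorem strRoute_correct (n : ℕ) (Q : Fin n → Bool)
    (φ : (Fin n → Bool) → Bool) :
    (∀ (i : ℕ), i ≤ n → ∀ x : Fin i → Bool,
      strRoute n Q φ i x = route (valQ n Q φ i x)) ∧
    (strRoute n Q φ 0 (fun j => j.elim0) Term.L = OutT.YES ↔
      valQ n Q φ 0 (fun j => j.elim0) = true) := by
  have h1 := strRoute_eq_route n Q φ (n - 0) 0 rfl (Nat.zero_le n)
  refine ⟨fun i hi x => strRoute_eq_route n Q φ (n - i) i rfl hi x, ?_⟩
  rw [h1 (fun j => j.elim0)]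
  cases h : valQ n Q φ 0 (fun j => j.elim0) <;> simp [route]
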